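/- arXiv:0704.2055 — 3 statements merged into one kernel-verified Lean document; each statement's English description precedes it below -/
import Mathlib

section
/- Let C ≥ 0, a < b, and D > e^{C·(b−a)} be real numbers. Then there exists T₀ ≥ 0 such that for all τ₊ ≥ T₀ and all τ₋ ≥ D·τ₊ there is a nonincreasing, continuously differentiable function τ : ℝ → ℝ with τ(s) = τ₋ for s ≤ a − 1, τ(s) = τ₊ for s ≥ b + 1, and τ'(s) ≤ −C·τ(s) − C for all s ∈ [a,b]. -/
open Real Set Topology

/-!
Write `τ = τ₊ + (τ₋ - τ₊) φ` with `φ` decreasing from `1` to `0`. The decay condition then holds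
for all large `τ₊` as soon as `φ' ≤ -C φ - κ` on `[a, b]` for some `κ` with `(D - 1) κ > C`.
Such a `φ` is `g ∘ ψ`, where `ψ` is a `C¹` ramp from `0` to `L` with slope `1` on `[a, b]`
(a primitive of a bump function, so `L` exceeds `b - a` as little as we like), and
`g x = (e^{-k x} - e^{-k L}) / (1 - e^{-k L})` solves `g' = -k g - κ` with
`κ = k e^{-k L} / (1 - e^{-k L})`; for `C ≤ k` this gives `g' ≤ -C g - κ` since `g ≥ 0`.
Choosing `k > C` and `L > b - a` close enough that `e^{k L} < D`, as `e^{C (b - a)} < D` allows,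
makes `(D - 1) κ > C`.
-/

theorem exists_pos_add_mul_add_lt {x y z : ℝ} (h : x * y < z) :
    ∃ t > 0, (x + t) * (y + t) < z := by
  have hcont : Continuous fun t : ℝ => (x + t) * (y + t) := by fun_prop
  have hnear : ∀ᶠ t in 𝓝[>] (0 : ℝ), (x + t) * (y + t) < z :=
    nhdsWithin_le_nhds (hcont.tendsto 0 |>.eventually (gt_mem_nhds (by simpa using h)))
  exact (hnear.and self_mem_nhdsWithin).exists.imp fun t ht => ⟨ht.2, ht.1⟩

structure IsRamp (c a b d L : ℝ) (ψ : ℝ → ℝ) : Prop where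
  contDiff : ContDiff ℝ 1 ψ
  monotone : Monotone ψ
  eq_zero : ∀ s ≤ c, ψ s = 0
  eq_top : ∀ s, d ≤ s → ψ s = L
  hasDerivAt_one : ∀ s ∈ Icc a b, HasDerivAt ψ 1 s

theorem IsRamp.le {c a b d L : ℝ} {ψ : ℝ → ℝ} (hψ : IsRamp c a b d L ψ) (s : ℝ) : ψ s ≤ L := by
  rcases le_total s d with hs | hs
  · exact (hψ.monotone hs).trans (hψ.eq_top d le_rfl).le
  · exact (hψ.eq_top s hs).le

theorem exists_isRamp {c a b d ε : ℝ} (hca : c < a) (hab : a < b) (hbd : b < d) (hε : 0 < ε) :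
    ∃ L, b - a ≤ L ∧ L < b - a + ε ∧ ∃ ψ, IsRamp c a b d L ψ := by
  set δ := min (ε / 4) (min (a - c) (d - b))
  have hδ : 0 < δ := lt_min (by positivity) (lt_min (by linarith) (by linarith))
  have hδε : δ < ε / 2 := (min_le_left _ _).trans_lt (by linarith)
  have hδc : δ ≤ a - c := (min_le_right _ _).trans (min_le_left _ _)
  have hδd : δ ≤ d - b := (min_le_right _ _).trans (min_le_right _ _)
  let ρ : ContDiffBump ((a + b) / 2) := ⟨(b - a) / 2, (b - a) / 2 + δ, by linarith, by linarith⟩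
  have hrIn : ρ.rIn = (b - a) / 2 := rfl
  have hrOut : ρ.rOut = (b - a) / 2 + δ := rfl
  have hsupp : Function.support ρ ⊆ Ioo c d := by
    rw [ρ.support_eq, Real.ball_eq_Ioo, hrOut]
    exact Ioo_subset_Ioo (by linarith) (by linarith)
  have hderiv : ∀ s, HasDerivAt (fun u => ∫ t in c..u, ρ t) (ρ s) s := fun s =>
    (ρ.continuous.integral_hasStrictDerivAt c s).hasDerivAt
  refine ⟨∫ t, ρ t, ?_, ?_, fun u => ∫ t in c..u, ρ t, ?_, ?_, ?_, ?_, ?_⟩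
  · have := ρ.measure_closedBall_le_integral MeasureTheory.volume
    rw [Real.volume_real_closedBall ρ.rIn_pos.le, hrIn] at this
    linarith
  · have := ρ.integral_le_measure_closedBall (μ := MeasureTheory.volume)
    rw [Real.volume_real_closedBall ρ.rOut_pos.le, hrOut] at this
    linarith
  · rw [contDiff_one_iff_deriv, funext fun s => (hderiv s).deriv]
    exact ⟨fun s => (hderiv s).differentiableAt, ρ.continuous⟩
  · exact monotone_of_deriv_nonneg (fun s => (hderiv s).differentiableAt)
      fun s => (hderiv s).deriv ▸ ρ.nonneg
  · intro s hs
    refine (intervalIntegral.integral_congr (g := fun _ => (0 : ℝ)) fun t ht => ?_).trans (by simp)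
    rw [uIcc_of_ge hs] at ht
    exact Function.notMem_support.1 fun h => (hsupp h).1.not_ge ht.2
  · intro s hs
    exact intervalIntegral.integral_eq_integral_of_support_subset
      (hsupp.trans (Ioo_subset_Ioc_self.trans (Ioc_subset_Ioc_right hs)))
  · intro s hs
    convert hderiv s
    exact (ρ.one_of_mem_closedBall (by
      rw [Real.closedBall_eq_Icc, hrIn]; constructor <;> linarith [hs.1, hs.2])).symm

theorem one_sub_exp_neg_ne_zero {x : ℝ} (hx : x ≠ 0) : 1 - exp (-x) ≠ 0 := by
  rw [sub_ne_zero, ne_comm, Ne, exp_eq_one_iff, neg_eq_zero]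
  exact hx

noncomputable def expTransition (k L x : ℝ) : ℝ :=
  (exp (-(k * x)) - exp (-(k * L))) / (1 - exp (-(k * L)))

section expTransition

variable {k L : ℝ}

theorem expTransition_zero (hkL : k * L ≠ 0) : expTransition k L 0 = 1 := by
  have := one_sub_exp_neg_ne_zero hkL
  simp [expTransition, this]

theorem expTransition_self : expTransition k L L = 0 := by
  simp [expTransition]

theorem contDiff_expTransition {n : WithTop ℕ∞} : ContDiff ℝ n (expTransition k L) := by
  unfold expTransition; fun_prop

theorem antitone_expTransition (hk : 0 ≤ k) (hkL : 0 ≤ k * L) : Antitone (expTransition k L) := by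
  intro x y hxy
  have : 0 ≤ 1 - exp (-(k * L)) := sub_nonneg.2 (exp_le_one_iff.2 (by linarith))
  unfold expTransition
  gcongr

theorem expTransition_nonneg (hk : 0 ≤ k) (hkL : 0 ≤ k * L) {x : ℝ} (hx : x ≤ L) :
    0 ≤ expTransition k L x :=
  expTransition_self (k := k) ▸ antitone_expTransition hk hkL hx

theorem hasDerivAt_expTransition (hkL : k * L ≠ 0) (x : ℝ) :
    HasDerivAt (expTransition k L)
      (-k * expTransition k L x - k * exp (-(k * L)) / (1 - exp (-(k * L)))) x := by
  have := one_sub_exp_neg_ne_zero hkL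
  refine ((((hasDerivAt_id x).const_mul k).neg.exp.sub_const (exp (-(k * L)))).div_const
    (1 - exp (-(k * L)))).congr_deriv ?_
  simp only [expTransition, id, Pi.neg_apply]
  field_simp
  ring

theorem deriv_expTransition_le {C : ℝ} (hCk : C ≤ k) (hk : 0 ≤ k) (hkL : 0 < k * L) {x : ℝ}
    (hx : x ≤ L) :
    deriv (expTransition k L) x ≤
      -C * expTransition k L x - k * exp (-(k * L)) / (1 - exp (-(k * L))) := by
  rw [(hasDerivAt_expTransition hkL.ne' x).deriv]
  nlinarith [mul_le_mul_of_nonneg_right hCk (expTransition_nonneg hk hkL.le hx)]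

end expTransition

structure IsDecayProfile (C κ c d a b : ℝ) (φ : ℝ → ℝ) : Prop where
  contDiff : ContDiff ℝ 1 φ
  antitone : Antitone φ
  eq_one : ∀ s ≤ c, φ s = 1
  eq_zero : ∀ s, d ≤ s → φ s = 0
  deriv_le : ∀ s ∈ Icc a b, deriv φ s ≤ -C * φ s - κ

theorem IsRamp.isDecayProfile_comp {C κ c a b d L : ℝ} {ψ g : ℝ → ℝ} (hψ : IsRamp c a b d L ψ)
    (hg : ContDiff ℝ 1 g) (hg_anti : Antitone g) (hg_zero : g 0 = 1) (hg_top : g L = 0)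
    (hg_deriv : ∀ x ≤ L, deriv g x ≤ -C * g x - κ) :
    IsDecayProfile C κ c d a b (g ∘ ψ) where
  contDiff := hg.comp hψ.contDiff
  antitone := hg_anti.comp_monotone hψ.monotone
  eq_one s hs := by simp [hψ.eq_zero s hs, hg_zero]
  eq_zero s hs := by simp [hψ.eq_top s hs, hg_top]
  deriv_le s hs := by
    have hcomp := (hg.differentiable one_ne_zero (ψ s)).hasDerivAt.comp s (hψ.hasDerivAt_one s hs)
    rw [hcomp.deriv, mul_one]
    exact hg_deriv _ (hψ.le s)

theorem IsDecayProfile.deriv_const_add_mul_le {C κ c d a b τ₀ Δ : ℝ} {φ : ℝ → ℝ}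
    (hφ : IsDecayProfile C κ c d a b φ) (hΔ : 0 ≤ Δ) (hgap : C * (τ₀ + 1) ≤ κ * Δ) :
    ∀ s ∈ Icc a b, deriv (fun s => τ₀ + Δ * φ s) s ≤ -C * (τ₀ + Δ * φ s) - C := by
  intro s hs
  have hdiff : DifferentiableAt ℝ φ s := hφ.contDiff.differentiable one_ne_zero s
  rw [deriv_const_add, deriv_const_mul _ hdiff]
  nlinarith [mul_le_mul_of_nonneg_left (hφ.deriv_le s hs) hΔ]

theorem exists_isDecayProfile {C D c a b d : ℝ} (hC : 0 ≤ C) (hca : c < a) (hab : a < b)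
    (hbd : b < d) (hD : exp (C * (b - a)) < D) :
    ∃ φ κ, 0 ≤ κ ∧ C < (D - 1) * κ ∧ IsDecayProfile C κ c d a b φ := by
  have hD0 : 0 < D := (exp_pos _).trans hD
  obtain ⟨t, ht, htD⟩ := exists_pos_add_mul_add_lt ((lt_log_iff_exp_lt hD0).2 hD)
  obtain ⟨L, hL_ge, hL_lt, ψ, hψ⟩ := exists_isRamp hca hab hbd ht
  have hk : 0 < C + t := by linarith
  have hkL : 0 < (C + t) * L := mul_pos hk (by linarith)
  set q := exp (-((C + t) * L))
  have hq : q < 1 := exp_lt_one_iff.2 (by linarith)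
  have hDq : 1 < D * q := by
    have : (C + t) * L < log D := (mul_lt_mul_of_pos_left hL_lt hk).trans htD
    rw [← exp_log hD0, ← exp_add]
    exact one_lt_exp_iff.2 (by linarith)
  refine ⟨expTransition (C + t) L ∘ ψ, (C + t) * q / (1 - q), by positivity, ?_,
    hψ.isDecayProfile_comp contDiff_expTransition (antitone_expTransition hk.le hkL.le)
      (expTransition_zero hkL.ne') expTransition_self
      fun x hx => deriv_expTransition_le (by linarith) hk.le hkL hx⟩
  rw [mul_div_assoc', lt_div_iff₀ (by linarith)]
  -- `(D - 1) k q - C (1 - q) = k (D q - 1) + (k - C) (1 - q)`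
  nlinarith [mul_pos hk (show 0 < D * q - 1 by linarith), mul_nonneg ht.le (sub_nonneg.2 hq.le)]

/-- For `D > e^{C(b-a)}` and all sufficiently large `τ₊`, whenever
`τ₋ ≥ D·τ₊` there is a nonincreasing `C¹` interpolation from `τ₋` to `τ₊`
satisfying the decay condition `τ' ≤ -C·τ - C` on `[a,b]`. -/
theorem slope_interpolation_exists
    (C a b D : ℝ) (hC : 0 ≤ C) (hab : a < b) (hD : Real.exp (C * (b - a)) < D) :
    ∃ T₀ : ℝ, 0 ≤ T₀ ∧ ∀ τplus, T₀ ≤ τplus → ∀ τminus, D * τplus ≤ τminus →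
      ∃ τ : ℝ → ℝ, ContDiff ℝ 1 τ ∧ Antitone τ ∧
        (∀ s, s ≤ a - 1 → τ s = τminus) ∧
        (∀ s, b + 1 ≤ s → τ s = τplus) ∧
        (∀ s ∈ Set.Icc a b, deriv τ s ≤ -C * τ s - C) := by
  obtain ⟨φ, κ, hκ, hCκ, hφ⟩ :=
    exists_isDecayProfile (c := a - 1) (d := b + 1) hC (by linarith) hab (by linarith) hD
  have hgap : 0 < (D - 1) * κ - C := sub_pos.2 hCκ
  have hD1 : 1 ≤ D := (one_le_exp (mul_nonneg hC (sub_nonneg.2 hab.le))).trans hD.le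
  refine ⟨C / ((D - 1) * κ - C), by positivity, fun τplus hT τminus hτ => ?_⟩
  have hτplus : 0 ≤ τplus := (by positivity : 0 ≤ C / ((D - 1) * κ - C)).trans hT
  have hΔ : 0 ≤ τminus - τplus := by nlinarith
  have hslope : C * (τplus + 1) ≤ κ * (τminus - τplus) := by
    rw [div_le_iff₀ hgap] at hT
    nlinarith [mul_le_mul_of_nonneg_left (show (D - 1) * τplus ≤ τminus - τplus by linarith) hκ]
  refine ⟨fun s => τplus + (τminus - τplus) * φ s, contDiff_const.add
    (contDiff_const.mul hφ.contDiff), (hφ.antitone.const_mul hΔ).const_add τplus,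
    fun s hs => ?_, fun s hs => ?_, hφ.deriv_const_add_mul_le hΔ hslope⟩
  · simp [hφ.eq_one s hs]
  · simp [hφ.eq_zero s hs]
end

section
/- Let n ≥ 1 and 1 ≤ k ≤ n, let w₁,…,w_k be positive real numbers, let U ⊆ ℂⁿ be an open neighborhood of 0, and let ψ : U → ℝ be continuously differentiable over ℝ. Define h(x) = −ψ(x) − Σ_{j=1}^{k} w_j·log|x_j| on Ω = {x ∈ U : x_j ≠ 0 for all 1 ≤ j ≤ k}. Then there is ε > 0 such that for every x ∈ Ω with ‖x‖ < ε, the real Fréchet derivative Dh(x) is nonzero; in fact Dh(x) evaluated on the vector v = (−x₁,…,−x_k,0,…,0) satisfies Dh(x)(v) ≥ ½·Σ_{j=1}^{k} w_j. -/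
/-!
In the direction of the Euler field `Y = -∑_{j ≤ k} x_j ∂_{x_j}`, each `log ‖x_j‖` has derivative
exactly `-1`, because `log ‖·‖` only shifts under scaling. Hence `dh(Y) = ∑ w_j - dψ(Y)`, and
`|dψ(Y)| ≤ ‖dψ(x)‖ ‖x‖` tends to `0` at the origin since `dψ` is continuous there, so
`dh(Y) ≥ ½ ∑ w_j` on a small punctured neighbourhood of `0`.
-/

open Filter Topology

section LogNorm

variable {E F : Type*} [NormedAddCommGroup E] [InnerProductSpace ℝ E]
  [NormedAddCommGroup F] [NormedSpace ℝ F]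

theorem hasFDerivAt_log_norm {x : E} (hx : x ≠ 0) :
    HasFDerivAt (fun y : E => Real.log ‖y‖) ((‖x‖ ^ 2)⁻¹ • innerSL ℝ x) x := by
  have hsq := ((hasStrictFDerivAt_norm_sq x).hasFDerivAt.log (by positivity)).const_mul
    (1 / 2 : ℝ)
  have half_log_sq : (fun y : E => 1 / 2 * Real.log (‖y‖ ^ 2)) = fun y => Real.log ‖y‖ := by
    funext y
    rw [Real.log_pow]
    push_cast
    ring
  rw [half_log_sq] at hsq
  have half_two : (1 / 2 : ℝ) • (‖x‖ ^ 2)⁻¹ • 2 • innerSL ℝ x = (‖x‖ ^ 2)⁻¹ • innerSL ℝ x := by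
    module
  rwa [half_two] at hsq

/-- Euler's identity for `log ‖·‖`, which changes by `log t` under scaling by `t > 0`. -/
theorem fderiv_log_norm_apply_self {x : E} (hx : x ≠ 0) :
    fderiv ℝ (fun y : E => Real.log ‖y‖) x x = 1 := by
  rw [(hasFDerivAt_log_norm hx).fderiv, smul_apply, innerSL_apply_apply,
    real_inner_self_eq_norm_sq, smul_eq_mul, inv_mul_cancel₀ (by positivity)]

theorem hasFDerivAt_sum_mul_log_norm {ι : Type*} (s : Finset ι) (w : ι → ℝ)
    (L : ι → F →L[ℝ] E) {x : F} (hx : ∀ j ∈ s, L j x ≠ 0) :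
    HasFDerivAt (fun y => ∑ j ∈ s, w j * Real.log ‖L j y‖)
      (∑ j ∈ s, w j • (fderiv ℝ (fun z : E => Real.log ‖z‖) (L j x)).comp (L j)) x := by
  refine HasFDerivAt.fun_sum fun j hj => ?_
  exact (((hasFDerivAt_log_norm (hx j hj)).differentiableAt.hasFDerivAt).comp x
    (L j).hasFDerivAt).const_mul (w j)

theorem fderiv_sum_mul_log_norm_apply {ι : Type*} (s : Finset ι) (w : ι → ℝ)
    (L : ι → F →L[ℝ] E) {x v : F} (hx : ∀ j ∈ s, L j x ≠ 0) (hv : ∀ j ∈ s, L j v = -L j x) :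
    fderiv ℝ (fun y => ∑ j ∈ s, w j * Real.log ‖L j y‖) x v = -∑ j ∈ s, w j := by
  rw [(hasFDerivAt_sum_mul_log_norm s w L hx).fderiv, sum_apply,
    ← Finset.sum_neg_distrib]
  refine Finset.sum_congr rfl fun j hj => ?_
  rw [smul_apply, ContinuousLinearMap.comp_apply, hv j hj, map_neg,
    fderiv_log_norm_apply_self (hx j hj), smul_eq_mul, mul_neg_one]

end LogNorm

theorem ContinuousAt.eventually_norm_mul_norm_lt {F G : Type*} [NormedAddCommGroup F]
    [NormedAddCommGroup G] {f : F → G} (hf : ContinuousAt f 0) {c : ℝ} (hc : 0 < c) :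
    ∀ᶠ x in 𝓝 0, ‖f x‖ * ‖x‖ < c := by
  have h : Tendsto (fun x => ‖f x‖ * ‖x‖) (𝓝 0) (𝓝 (‖f 0‖ * ‖(0 : F)‖)) :=
    hf.norm.mul continuous_norm.continuousAt
  rw [norm_zero, mul_zero] at h
  exact h.eventually_lt_const hc

theorem EuclideanSpace.norm_le_norm_of_forall {𝕜 ι : Type*} [RCLike 𝕜] [Fintype ι]
    {x y : EuclideanSpace 𝕜 ι} (h : ∀ j, ‖x j‖ ≤ ‖y j‖) : ‖x‖ ≤ ‖y‖ := by
  rw [EuclideanSpace.norm_eq, EuclideanSpace.norm_eq]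
  gcongr with j
  exact h j

theorem derivative_nonzero_near_divisor_general
    (n k : ℕ) (hk1 : 1 ≤ k) (hkn : k ≤ n)
    (w : Fin n → ℝ) (hw : ∀ j : Fin n, (j : ℕ) < k → 0 < w j)
    (U : Set (EuclideanSpace ℂ (Fin n))) (hU : IsOpen U) (h0U : (0 : EuclideanSpace ℂ (Fin n)) ∈ U)
    (ψ : EuclideanSpace ℂ (Fin n) → ℝ) (hψ : ContDiffOn ℝ 1 ψ U)
    (h : EuclideanSpace ℂ (Fin n) → ℝ)
    (hdef : ∀ x, h x = -ψ x - ∑ j : Fin n,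
        (if (j : ℕ) < k then w j * Real.log ‖x j‖ else 0)) :
    ∃ ε > 0, ∀ x ∈ U, (∀ j : Fin n, (j : ℕ) < k → x j ≠ 0) → ‖x‖ < ε →
      fderiv ℝ h x ≠ 0 ∧
      (1 / 2) * ∑ j : Fin n, (if (j : ℕ) < k then w j else 0) ≤
        fderiv ℝ h x
          ((WithLp.equiv 2 (Fin n → ℂ)).symm
            (fun j => if (j : ℕ) < k then -(x j) else 0)) := by
  set s := Finset.univ.filter fun j : Fin n => (j : ℕ) < k
  simp only [← Finset.sum_filter] at hdef ⊢
  have hS : 0 < ∑ j ∈ s, w j :=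
    Finset.sum_pos (fun j hj => hw j (Finset.mem_filter.1 hj).2)
      ⟨⟨0, by omega⟩, Finset.mem_filter.2 ⟨Finset.mem_univ _, hk1⟩⟩
  have hψ' : ContinuousAt (fderiv ℝ ψ) 0 :=
    (hψ.continuousOn_fderiv_of_isOpen hU le_rfl).continuousAt (hU.mem_nhds h0U)
  obtain ⟨ε, hε, hsmall⟩ :=
    Metric.eventually_nhds_iff.1 (hψ'.eventually_norm_mul_norm_lt (half_pos hS))
  refine ⟨ε, hε, fun x hxU hx hxε => ?_⟩
  set v : EuclideanSpace ℂ (Fin n) :=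
    (WithLp.equiv 2 (Fin n → ℂ)).symm fun j => if (j : ℕ) < k then -(x j) else 0
  let L (j : Fin n) := (EuclideanSpace.proj j : EuclideanSpace ℂ (Fin n) →L[ℂ] ℂ).restrictScalars ℝ
  have hLx : ∀ j ∈ s, L j x ≠ 0 := fun j hj => hx j (Finset.mem_filter.1 hj).2
  have hLv : ∀ j ∈ s, L j v = -L j x := fun j hj => if_pos (Finset.mem_filter.1 hj).2
  have hv : ‖v‖ ≤ ‖x‖ := EuclideanSpace.norm_le_norm_of_forall fun j => by
    change ‖ite _ _ _‖ ≤ _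
    split_ifs <;> simp
  have hderiv : fderiv ℝ h x =
      -fderiv ℝ ψ x - fderiv ℝ (fun y => ∑ j ∈ s, w j * Real.log ‖L j y‖) x :=
    ((((hψ.differentiableOn one_ne_zero).differentiableAt (hU.mem_nhds hxU)).hasFDerivAt.neg.sub
      (hasFDerivAt_sum_mul_log_norm s w L hLx).differentiableAt.hasFDerivAt).congr_of_eventuallyEq
      (Eventually.of_forall hdef)).fderiv
  have hψv : |fderiv ℝ ψ x v| < (∑ j ∈ s, w j) / 2 :=
    (((fderiv ℝ ψ x).le_opNorm v).trans (mul_le_mul_of_nonneg_left hv (norm_nonneg _))).trans_lt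
      (hsmall (by rwa [dist_zero_right]))
  have hlower : (1 / 2) * ∑ j ∈ s, w j ≤ fderiv ℝ h x v := by
    rw [hderiv, sub_apply, neg_apply, fderiv_sum_mul_log_norm_apply s w L hLx hLv]
    linarith [abs_lt.1 hψv]
  exact ⟨fun h0 => by rw [h0, zero_apply] at hlower; linarith, hlower⟩

/-- Near a normal crossing point, the function
`h(x) = -ψ(x) - ∑_{j<k} w_j log|x_j|` has nonvanishing derivative: its
derivative in the direction `v = (-x₁,…,-x_k,0,…,0)` is at least `½ ∑ w_j`. -/
theorem derivative_nonzero_near_divisor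
    (n k : ℕ) (hn : 1 ≤ n) (hk1 : 1 ≤ k) (hkn : k ≤ n)
    (w : Fin n → ℝ) (hw : ∀ j : Fin n, (j : ℕ) < k → 0 < w j)
    (U : Set (EuclideanSpace ℂ (Fin n))) (hU : IsOpen U) (h0U : (0 : EuclideanSpace ℂ (Fin n)) ∈ U)
    (ψ : EuclideanSpace ℂ (Fin n) → ℝ) (hψ : ContDiffOn ℝ 1 ψ U)
    (h : EuclideanSpace ℂ (Fin n) → ℝ)
    (hdef : ∀ x, h x = -ψ x - ∑ j : Fin n,
        (if (j : ℕ) < k then w j * Real.log ‖x j‖ else 0)) :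
    ∃ ε > 0, ∀ x ∈ U, (∀ j : Fin n, (j : ℕ) < k → x j ≠ 0) → ‖x‖ < ε →
      fderiv ℝ h x ≠ 0 ∧
      (1 / 2) * ∑ j : Fin n, (if (j : ℕ) < k then w j else 0) ≤
        fderiv ℝ h x
          ((WithLp.equiv 2 (Fin n → ℂ)).symm
            (fun j => if (j : ℕ) < k then -(x j) else 0)) :=
  derivative_nonzero_near_divisor_general n k hk1 hkn w hw U hU h0U ψ hψ h hdef
end

section
/- Let n ≥ 1 and 1 ≤ k ≤ n, let U ⊆ ℂⁿ be an open neighborhood of 0, let ψ₀, ψ₁ : U → ℝ be continuously differentiable over ℝ, and let w⁰₁,…,w⁰_k and w¹₁,…,w¹_k be positive real numbers. For t ∈ [0,1] define h_t(x) = −(1−t)·ψ₀(x) − t·ψ₁(x) − Σ_{j=1}^{k} ((1−t)·w⁰_j + t·w¹_j)·log|x_j| on Ω = {x ∈ U : x_j ≠ 0 for all 1 ≤ j ≤ k}. Then there is ε > 0, independent of t, such that for every t ∈ [0,1] and every x ∈ Ω with ‖x‖ < ε, the real Fréchet derivative of h_t at x is nonzero. -/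
/-!
Write `h_t = (1 - t) h₀ + t h₁` with `h_i = -ψ_i - ∑_{j<k} w^i_j log |x_j|`, and differentiate in
the direction `v = x₀ e₀` of the first divisor coordinate. Since `log |·|` has radial derivative
`1`, the logarithmic part of `dh_i(x) v` is exactly `-w^i_0`, while `dψ_i(x) v → 0` as `x → 0`
by continuity of `dψ_i`. Hence `dh₀(x) v` and `dh₁(x) v` are both negative near `0`, and so is
every convex combination of them, uniformly in `t`.
-/

open Filter Topology

section LogNorm

theorem differentiableAt_log_norm {E : Type*} [NormedAddCommGroup E] [InnerProductSpace ℝ E]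
    {z : E} (hz : z ≠ 0) : DifferentiableAt ℝ (fun w : E => Real.log ‖w‖) z :=
  ((contDiffAt_norm ℝ hz).differentiableAt one_ne_zero).log (norm_ne_zero_iff.2 hz)

variable {E : Type*} [NormedAddCommGroup E] [NormedSpace ℝ E] {z : E}

theorem DifferentiableAt.fderiv_log_norm_apply_self
    (hd : DifferentiableAt ℝ (fun w : E => Real.log ‖w‖) z) (hz : z ≠ 0) :
    fderiv ℝ (fun w : E => Real.log ‖w‖) z z = 1 := by
  have hray : HasDerivAt (fun s : ℝ => Real.log ‖s • z‖)
      (fderiv ℝ (fun w : E => Real.log ‖w‖) z z) 1 := by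
    have hline : HasDerivAt (fun s : ℝ => s • z) z 1 := by
      simpa using (hasDerivAt_id (1 : ℝ)).smul_const z
    exact hd.hasFDerivAt.comp_hasDerivAt_of_eq (1 : ℝ) hline (one_smul ℝ z).symm
  have hsplit : (fun s : ℝ => Real.log ‖s • z‖) =ᶠ[𝓝 1] fun s => Real.log s + Real.log ‖z‖ := by
    filter_upwards [lt_mem_nhds one_pos] with s hs
    rw [norm_smul, Real.norm_of_nonneg hs.le, Real.log_mul hs.ne' (norm_ne_zero_iff.2 hz)]
  have hlog : HasDerivAt (fun s : ℝ => Real.log ‖s • z‖) 1 1 := by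
    simpa using ((Real.hasDerivAt_log one_ne_zero).add_const _).congr_of_eventuallyEq hsplit
  exact hray.unique hlog

end LogNorm

section Coordinates

variable {ι : Type*} [Fintype ι] {x : EuclideanSpace ℂ ι} {j : ι}

theorem hasFDerivAt_log_norm_apply (hx : x j ≠ 0) :
    HasFDerivAt (fun y : EuclideanSpace ℂ ι => Real.log ‖y j‖)
      ((fderiv ℝ (fun w : ℂ => Real.log ‖w‖) (x j)).comp
        ((EuclideanSpace.proj j : EuclideanSpace ℂ ι →L[ℂ] ℂ).restrictScalars ℝ)) x := by
  have hproj :=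
    ((EuclideanSpace.proj j : EuclideanSpace ℂ ι →L[ℂ] ℂ).restrictScalars ℝ).hasFDerivAt (x := x)
  exact (differentiableAt_log_norm hx).hasFDerivAt.comp x hproj

theorem fderiv_log_norm_apply_single [DecidableEq ι] (hx : x j ≠ 0) (i : ι) :
    fderiv ℝ (fun y : EuclideanSpace ℂ ι => Real.log ‖y j‖) x (EuclideanSpace.single i (x i)) =
      if i = j then 1 else 0 := by
  rw [(hasFDerivAt_log_norm_apply hx).fderiv]
  by_cases hij : i = j
  · subst hij
    simpa using (differentiableAt_log_norm hx).fderiv_log_norm_apply_self hx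
  · simp [Ne.symm hij, hij]

end Coordinates

section LogDivisorFunction

variable {ι : Type*} [Fintype ι] {ψ : EuclideanSpace ℂ ι → ℝ} {w : ι → ℝ} {s : Finset ι}
  {x : EuclideanSpace ℂ ι} {i : ι}

/-- The local form `-ψ - ∑_{j ∈ s} w_j log |x_j|` of `-log ‖σ‖` for a section `σ` of a metrized
line bundle vanishing to order `w_j` along `x_j = 0`. -/
noncomputable def logDivisorFunction (ψ : EuclideanSpace ℂ ι → ℝ) (w : ι → ℝ) (s : Finset ι)
    (y : EuclideanSpace ℂ ι) : ℝ :=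
  -ψ y - ∑ j ∈ s, w j * Real.log ‖y j‖

theorem fderiv_logDivisorFunction_apply_single [DecidableEq ι] (hψ : DifferentiableAt ℝ ψ x)
    (hx : ∀ j ∈ s, x j ≠ 0) (hi : i ∈ s) :
    fderiv ℝ (logDivisorFunction ψ w s) x (EuclideanSpace.single i (x i)) =
      -fderiv ℝ ψ x (EuclideanSpace.single i (x i)) - w i := by
  have hlog : ∀ j ∈ s, DifferentiableAt ℝ (fun y : EuclideanSpace ℂ ι => w j * Real.log ‖y j‖) x :=
    fun j hj => (hasFDerivAt_log_norm_apply (hx j hj)).differentiableAt.const_mul (w j)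
  unfold logDivisorFunction
  rw [fderiv_fun_sub hψ.fun_neg (DifferentiableAt.fun_sum hlog), fderiv_fun_sum hlog]
  have hterm : ∀ j ∈ s, fderiv ℝ (fun y : EuclideanSpace ℂ ι => w j * Real.log ‖y j‖) x
      (EuclideanSpace.single i (x i)) = if i = j then w j else 0 := fun j hj => by
    rw [fderiv_const_mul (hasFDerivAt_log_norm_apply (hx j hj)).differentiableAt]
    simp [fderiv_log_norm_apply_single (hx j hj) i]
  simp [fderiv_fun_neg, Finset.sum_congr rfl hterm, hi]

theorem eventually_fderiv_logDivisorFunction_apply_single_neg [DecidableEq ι]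
    {U : Set (EuclideanSpace ℂ ι)} (hψ : ContDiffOn ℝ 1 ψ U) (hU : IsOpen U)
    {a : EuclideanSpace ℂ ι} (haU : a ∈ U) (ha : a i = 0) (hi : i ∈ s) (hwi : 0 < w i) :
    ∀ᶠ x in 𝓝 a, (∀ j ∈ s, x j ≠ 0) →
      fderiv ℝ (logDivisorFunction ψ w s) x (EuclideanSpace.single i (x i)) < 0 := by
  have hcont : ContinuousAt (fun x => fderiv ℝ ψ x (EuclideanSpace.single i (x i))) a :=
    ((hψ.continuousOn_fderiv_of_isOpen hU le_rfl).continuousAt (hU.mem_nhds haU)).clm_apply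
      ((PiLp.continuous_toLp 2 _).comp
        ((continuous_single i).comp (PiLp.continuous_apply 2 _ i))).continuousAt
  have hsmall : ∀ᶠ x in 𝓝 a, -w i < fderiv ℝ ψ x (EuclideanSpace.single i (x i)) :=
    hcont.eventually (lt_mem_nhds (by simpa [ha, (PiLp.single_eq_zero_iff 2 i).2 rfl] using hwi))
  filter_upwards [hsmall, hU.mem_nhds haU] with x hxψ hxU hxs
  rw [fderiv_logDivisorFunction_apply_single
    ((hψ.differentiableOn one_ne_zero).differentiableAt (hU.mem_nhds hxU)) hxs hi]
  linarith

end LogDivisorFunction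

theorem fderiv_convex_combination_apply_neg {E : Type*} [NormedAddCommGroup E] [NormedSpace ℝ E]
    {g₀ g₁ : E → ℝ} {x v : E} {t : ℝ} (ht : t ∈ Set.Icc (0 : ℝ) 1)
    (h₀ : fderiv ℝ g₀ x v < 0) (h₁ : fderiv ℝ g₁ x v < 0) :
    fderiv ℝ (fun y => (1 - t) * g₀ y + t * g₁ y) x v < 0 := by
  have hd₀ : DifferentiableAt ℝ g₀ x := by
    by_contra hnd
    simp [fderiv_zero_of_not_differentiableAt hnd] at h₀
  have hd₁ : DifferentiableAt ℝ g₁ x := by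
    by_contra hnd
    simp [fderiv_zero_of_not_differentiableAt hnd] at h₁
  rw [fderiv_fun_add (hd₀.const_mul _) (hd₁.const_mul _), fderiv_const_mul hd₀,
    fderiv_const_mul hd₁]
  exact convex_Iio (𝕜 := ℝ) (0 : ℝ) h₀ h₁ (sub_nonneg.2 ht.2) ht.1 (sub_add_cancel 1 t)

theorem derivative_nonzero_near_divisor_family_general
    (n k : ℕ) (hn : 1 ≤ n) (hk1 : 1 ≤ k)
    (w0 w1 : Fin n → ℝ)
    (hw0 : ∀ j : Fin n, (j : ℕ) < k → 0 < w0 j)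
    (hw1 : ∀ j : Fin n, (j : ℕ) < k → 0 < w1 j)
    (U : Set (EuclideanSpace ℂ (Fin n))) (hU : IsOpen U) (h0U : (0 : EuclideanSpace ℂ (Fin n)) ∈ U)
    (ψ0 ψ1 : EuclideanSpace ℂ (Fin n) → ℝ)
    (hψ0 : ContDiffOn ℝ 1 ψ0 U) (hψ1 : ContDiffOn ℝ 1 ψ1 U)
    (h : ℝ → EuclideanSpace ℂ (Fin n) → ℝ)
    (hdef : ∀ t x, h t x = -((1 - t) * ψ0 x) - t * ψ1 x - ∑ j : Fin n,
        (if (j : ℕ) < k then ((1 - t) * w0 j + t * w1 j) * Real.log ‖x j‖ else 0)) :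
    ∃ ε > 0, ∀ t ∈ Set.Icc (0 : ℝ) 1, ∀ x ∈ U,
      (∀ j : Fin n, (j : ℕ) < k → x j ≠ 0) → ‖x‖ < ε →
      fderiv ℝ (h t) x ≠ 0 := by
  classical
  set s : Finset (Fin n) := Finset.univ.filter fun j => (j : ℕ) < k
  set i : Fin n := ⟨0, hn⟩
  have hi : i ∈ s := Finset.mem_filter.2 ⟨Finset.mem_univ _, hk1⟩
  have hconvex : ∀ t, h t = fun y =>
      (1 - t) * logDivisorFunction ψ0 w0 s y + t * logDivisorFunction ψ1 w1 s y := by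
    intro t
    funext y
    have hsum : ∑ j : Fin n, (if (j : ℕ) < k then ((1 - t) * w0 j + t * w1 j) * Real.log ‖y j‖
        else 0) =
        (1 - t) * ∑ j ∈ s, w0 j * Real.log ‖y j‖ + t * ∑ j ∈ s, w1 j * Real.log ‖y j‖ := by
      rw [Finset.sum_filter, Finset.sum_filter, Finset.mul_sum, Finset.mul_sum,
        ← Finset.sum_add_distrib]
      refine Finset.sum_congr rfl fun j _ => ?_
      split_ifs <;> ring
    rw [hdef, hsum, logDivisorFunction, logDivisorFunction]
    ring
  obtain ⟨ε, hε, hball⟩ := Metric.eventually_nhds_iff.1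
    ((eventually_fderiv_logDivisorFunction_apply_single_neg hψ0 hU h0U rfl hi (hw0 i hk1)).and
      (eventually_fderiv_logDivisorFunction_apply_single_neg hψ1 hU h0U rfl hi (hw1 i hk1)))
  refine ⟨ε, hε, fun t ht x _ hx hxε => ?_⟩
  have hxs : ∀ j ∈ s, x j ≠ 0 := by simpa [s] using hx
  obtain ⟨h₀, h₁⟩ := hball (by simpa using hxε)
  have hneg := fderiv_convex_combination_apply_neg ht (h₀ hxs) (h₁ hxs)
  rw [← hconvex] at hneg
  intro hzero
  simp [hzero] at hneg

/-- For the family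
`h_t(x) = -(1-t)ψ₀(x) - tψ₁(x) - ∑_{j<k} ((1-t)w⁰_j + t w¹_j) log|x_j|`,
there is an `ε > 0`, uniform in `t ∈ [0,1]`, such that `h_t` has nonvanishing
derivative at every point of `Ω` of norm `< ε`. -/
theorem derivative_nonzero_near_divisor_family
    (n k : ℕ) (hn : 1 ≤ n) (hk1 : 1 ≤ k) (hkn : k ≤ n)
    (w0 w1 : Fin n → ℝ)
    (hw0 : ∀ j : Fin n, (j : ℕ) < k → 0 < w0 j)
    (hw1 : ∀ j : Fin n, (j : ℕ) < k → 0 < w1 j)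
    (U : Set (EuclideanSpace ℂ (Fin n))) (hU : IsOpen U) (h0U : (0 : EuclideanSpace ℂ (Fin n)) ∈ U)
    (ψ0 ψ1 : EuclideanSpace ℂ (Fin n) → ℝ)
    (hψ0 : ContDiffOn ℝ 1 ψ0 U) (hψ1 : ContDiffOn ℝ 1 ψ1 U)
    (h : ℝ → EuclideanSpace ℂ (Fin n) → ℝ)
    (hdef : ∀ t x, h t x = -((1 - t) * ψ0 x) - t * ψ1 x - ∑ j : Fin n,
        (if (j : ℕ) < k then ((1 - t) * w0 j + t * w1 j) * Real.log ‖x j‖ else 0)) :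
    ∃ ε > 0, ∀ t ∈ Set.Icc (0 : ℝ) 1, ∀ x ∈ U,
      (∀ j : Fin n, (j : ℕ) < k → x j ≠ 0) → ‖x‖ < ε →
      fderiv ℝ (h t) x ≠ 0 :=
  derivative_nonzero_near_divisor_family_general n k hn hk1 w0 w1 hw0 hw1 U hU h0U ψ0 ψ1 hψ0 hψ1 h
    hdef
end
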